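/- Immersion monotonicity of edge-admissibility: if H is an immersion of G, then δ_e^∞(H) ≤ δ_e^∞(G). -/

import Mathlib

/-- A walk in a multigraph given by its endpoint function `ends`:
`IsWalk ends u w l` means `l` is the list of edges of a walk from `u` to `w`. -/
inductive IsWalk {V E : Type*} (ends : E → Sym2 V) : V → V → List E → Prop
  | nil (v : V) : IsWalk ends v v []
  | cons {u v w : V} {e : E} {l : List E} :
      ends e = s(u, v) → IsWalk ends v w l → IsWalk ends u w (e :: l)

/-- `EdgeSep ends s x S A` : the edge set `A` meets every walk of length at most `s`
from `x` to a vertex of `S`. -/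
def EdgeSep {V E : Type*} (ends : E → Sym2 V) (s : ℕ∞) (x : V) (S : Set V) (A : Set E) : Prop :=
  ∀ y ∈ S, ∀ l : List E, IsWalk ends x y l → (l.length : ℕ∞) ≤ s → ∃ e ∈ l, e ∈ A

/-- A `(k,s)`-edge-hide-out: every edge set separating a vertex `x ∈ R` from `R \ {x}`
(at distance `s`) has at least `k` edges. -/
def IsHideout {V E : Type*} (ends : E → Sym2 V) (s : ℕ∞) (k : ℕ) (R : Set V) : Prop :=
  ∀ x ∈ R, ∀ A : Set E, EdgeSep ends s x (R \ {x}) A → k ≤ A.ncard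

/-- `G` admits a layout of `s`-edge-degeneracy at most `k`. -/
def LayoutWidthLE {V E : Type*} (ends : E → Sym2 V) (s : ℕ∞) (k : ℕ) : Prop :=
  ∃ (n : ℕ) (L : Fin n ≃ V), ∀ i : Fin n,
    ∃ A : Set E, A.ncard ≤ k ∧ EdgeSep ends s (L i) {v | ∃ j, j < i ∧ L j = v} A

/-- The `s`-edge-degeneracy `δ_e^s(G)`. -/
noncomputable def edgeDeg {V E : Type*} (ends : E → Sym2 V) (s : ℕ∞) : ℕ :=
  sInf {k | LayoutWidthLE ends s k}

/-- The edge-degree of a vertex (parallel edges counted with multiplicity). -/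
noncomputable def degE {V E : Type*} (ends : E → Sym2 V) (v : V) : ℕ :=
  {e : E | v ∈ ends e}.ncard
/-- The multigraph `θ_k`: two vertices joined by `k` parallel edges. -/
def thetaEnds (k : ℕ) : Fin k → Sym2 (Fin 2) := fun _ => s(0, 1)

/-- `H` is an immersion of `G`: an injection of the vertices of `H` into those of `G`
together with pairwise edge-disjoint trails of `G` realizing the edges of `H`. -/
def Immersion {V' E' V E : Type*} (ends' : E' → Sym2 V') (ends : E → Sym2 V) : Prop :=
  ∃ (φ : V' ↪ V) (P : E' → List E),
    (∀ e : E', ∃ u v : V', ends' e = s(u, v) ∧ IsWalk ends (φ u) (φ v) (P e) ∧ (P e).Nodup) ∧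
    ∀ e f : E', e ≠ f → ∀ x ∈ P e, x ∉ P f

/-! Order the vertices of `H` as their images appear in an optimal layout of `G`. A walk of `H`
lifts, edge by edge along the immersion trails, to a walk of `G` between the images of its ends,
so a separator `A` in `G` pulls back to the set of edges of `H` whose trail meets `A`; as the
trails are edge-disjoint, this set is no larger than `A`. Lifting lengthens walks, which is why
the argument needs unbounded walk length `s = ∞`. -/

theorem IsWalk.append {V E : Type*} {ends : E → Sym2 V} {u v w : V} {l₁ l₂ : List E}
    (h₁ : IsWalk ends u v l₁) (h₂ : IsWalk ends v w l₂) : IsWalk ends u w (l₁ ++ l₂) := by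
  induction h₁ with
  | nil => exact h₂
  | cons he _ ih => exact .cons he (ih h₂)

theorem IsWalk.reverse {V E : Type*} {ends : E → Sym2 V} {u v : V} {l : List E}
    (h : IsWalk ends u v l) : IsWalk ends v u l.reverse := by
  induction h with
  | nil v => exact .nil v
  | cons he _ ih =>
    rw [List.reverse_cons]
    exact ih.append (.cons (he.trans Sym2.eq_swap) (.nil _))

theorem IsWalk.ne_nil {V E : Type*} {ends : E → Sym2 V} {u v : V} {l : List E}
    (h : IsWalk ends u v l) (huv : u ≠ v) : l ≠ [] := by
  rintro rfl
  cases h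
  exact huv rfl

theorem IsWalk.exists_lift {V' E' V E : Type*} {ends' : E' → Sym2 V'} {ends : E → Sym2 V}
    {φ : V' → V} {P : E' → List E}
    (hP : ∀ e', ∃ u v, ends' e' = s(u, v) ∧ IsWalk ends (φ u) (φ v) (P e'))
    {u v : V'} {l : List E'} (h : IsWalk ends' u v l) :
    ∃ lG : List E, IsWalk ends (φ u) (φ v) lG ∧ ∀ a ∈ lG, ∃ e' ∈ l, a ∈ P e' := by
  induction h with
  | nil v => exact ⟨[], .nil _, by simp⟩
  | @cons u v w e l he _ ih =>
    obtain ⟨lG, hwalk, hmem⟩ := ih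
    obtain ⟨u₀, v₀, he₀, hP₀⟩ := hP e
    have hlift : ∃ p : List E, IsWalk ends (φ u) (φ v) p ∧ ∀ a ∈ p, a ∈ P e := by
      rcases Sym2.eq_iff.mp (he.symm.trans he₀) with ⟨rfl, rfl⟩ | ⟨rfl, rfl⟩
      · exact ⟨P e, hP₀, fun _ ha => ha⟩
      · exact ⟨(P e).reverse, hP₀.reverse, fun _ ha => List.mem_reverse.mp ha⟩
    obtain ⟨p, hp, hpe⟩ := hlift
    refine ⟨p ++ lG, hp.append hwalk, fun a ha => ?_⟩
    rcases List.mem_append.mp ha with ha | ha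
    · exact ⟨e, List.mem_cons_self, hpe a ha⟩
    · obtain ⟨e', he', hae'⟩ := hmem a ha
      exact ⟨e', List.mem_cons_of_mem _ he', hae'⟩

theorem ncard_setOf_exists_mem_le_of_disjoint {E' E : Type*} {P : E' → List E}
    (hdisj : ∀ e f : E', e ≠ f → ∀ x ∈ P e, x ∉ P f) {A : Set E} (hA : A.Finite) :
    {e' | ∃ a ∈ A, a ∈ P e'}.ncard ≤ A.ncard := by
  rcases isEmpty_or_nonempty E with _ | _
  · simp [Set.eq_empty_of_isEmpty A]
  choose! g hgA hgP using fun e' (he' : ∃ a ∈ A, a ∈ P e') => he'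
  refine Set.ncard_le_ncard_of_injOn g hgA (fun e he f hf hef => ?_) hA
  by_contra hne
  exact hdisj e f hne _ (hgP e he) (hef ▸ hgP f hf)

theorem EdgeSep.comap_immersion {V' E' V E : Type*} {ends' : E' → Sym2 V'} {ends : E → Sym2 V}
    {φ : V' → V} {P : E' → List E}
    (hP : ∀ e', ∃ u v, ends' e' = s(u, v) ∧ IsWalk ends (φ u) (φ v) (P e'))
    {x : V'} {S : Set V'} {T : Set V} {A : Set E} (hA : EdgeSep ends ⊤ (φ x) T A)
    (hST : ∀ y ∈ S, φ y ∈ T) :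
    EdgeSep ends' ⊤ x S {e' | ∃ a ∈ A, a ∈ P e'} := by
  intro y hy l hl _
  obtain ⟨lG, hlG, hmem⟩ := hl.exists_lift hP
  obtain ⟨a, haG, haA⟩ := hA _ (hST y hy) lG hlG le_top
  obtain ⟨e', he', hae'⟩ := hmem a haG
  exact ⟨e', he', a, haA, hae'⟩

theorem exists_equiv_fin_strictMono_comp {α β : Type*} [Finite α] [LinearOrder β]
    {f : α → β} (hf : Function.Injective f) :
    ∃ (m : ℕ) (L : Fin m ≃ α), StrictMono (f ∘ L) := by
  let _ : LinearOrder α := LinearOrder.lift' f hf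
  have : Fintype α := Fintype.ofFinite α
  exact ⟨_, (monoEquivOfFin α rfl).toEquiv, fun _ _ hij => (monoEquivOfFin α rfl).strictMono hij⟩

theorem layoutWidthLE_ncard_univ {V E : Type*} [Finite V] (ends : E → Sym2 V) (s : ℕ∞) :
    LayoutWidthLE ends s (Set.univ : Set E).ncard := by
  have : Fintype V := Fintype.ofFinite V
  refine ⟨_, (Fintype.equivFin V).symm, fun i => ⟨Set.univ, le_rfl, ?_⟩⟩
  rintro _ ⟨j, hji, rfl⟩ l hl -
  obtain ⟨e, he⟩ := List.exists_mem_of_ne_nil l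
    (hl.ne_nil fun h => hji.ne ((Fintype.equivFin V).symm.injective h).symm)
  exact ⟨e, he, trivial⟩

theorem LayoutWidthLE.of_immersion {V' E' V E : Type*} [Finite E]
    {ends' : E' → Sym2 V'} {ends : E → Sym2 V} (him : Immersion ends' ends) {k : ℕ}
    (h : LayoutWidthLE ends ⊤ k) : LayoutWidthLE ends' ⊤ k := by
  obtain ⟨φ, P, hP, hdisj⟩ := him
  obtain ⟨n, L, hL⟩ := h
  have hP' : ∀ e', ∃ u v, ends' e' = s(u, v) ∧ IsWalk ends (φ u) (φ v) (P e') :=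
    fun e' => (hP e').imp fun _ => .imp fun _ h => ⟨h.1, h.2.1⟩
  set f : V' → Fin n := fun x => L.symm (φ x)
  have hf : Function.Injective f := L.symm.injective.comp φ.injective
  have : Finite V' := Finite.of_injective f hf
  obtain ⟨m, L', hL'⟩ := exists_equiv_fin_strictMono_comp hf
  refine ⟨m, L', fun i => ?_⟩
  obtain ⟨A, hAcard, hAsep⟩ := hL (f (L' i))
  refine ⟨_, (ncard_setOf_exists_mem_le_of_disjoint hdisj A.toFinite).trans hAcard,
    EdgeSep.comap_immersion hP' (by simpa [f] using hAsep) ?_⟩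
  rintro _ ⟨j, hji, rfl⟩
  exact ⟨f (L' j), hL' hji, L.apply_symm_apply _⟩

theorem edgeDeg_mono_immersion_general {V' E' V E : Type*} [Finite V] [Finite E]
    (ends' : E' → Sym2 V') (ends : E → Sym2 V)
    (him : Immersion ends' ends) :
    edgeDeg ends' ⊤ ≤ edgeDeg ends ⊤ :=
  Nat.sInf_le <| LayoutWidthLE.of_immersion him <|
    Nat.sInf_mem (s := {k | LayoutWidthLE ends ⊤ k}) ⟨_, layoutWidthLE_ncard_univ ends ⊤⟩

/-- immersion monotonicity of `∞`-edge-admissibility: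
if `H` is an immersion of `G` then `δ_e^∞(H) ≤ δ_e^∞(G)`. -/
theorem edgeDeg_mono_immersion {V' E' V E : Type*} [Finite V'] [Finite E'] [Finite V] [Finite E]
    (ends' : E' → Sym2 V') (ends : E → Sym2 V)
    (hl' : ∀ e, ¬ (ends' e).IsDiag) (hl : ∀ e, ¬ (ends e).IsDiag)
    (him : Immersion ends' ends) :
    edgeDeg ends' ⊤ ≤ edgeDeg ends ⊤ :=
  edgeDeg_mono_immersion_general ends' ends him
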